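/- arXiv:1811.09695 — 4 statements merged into one kernel-verified Lean document; each statement's English description precedes it below -/
import Mathlib

section
/- Let W be a binary-input discrete memoryless channel with finite output alphabet 𝒵, with Q_0 = W(·|0) everywhere positive and Q_1 = W(·|1) ≠ Q_0. Let 1 ≤ k ≤ n and let G ∈ F_2^{k×n} have rank k, defining the (n,k) binary linear code {vG : v ∈ F_2^k}. Let Q̂^n be the pmf on 𝒵^n given by Q̂^n(z) = 2^{−k} Σ_{v∈F_2^k} W^{⊗n}(z | vG). Then there exists a set A ⊆ 𝒵^n (a deterministic binary hypothesis test) such that Q_0^{⊗n}(A) ≤ 16/(k·χ_2(Q_1‖Q_0)) and Q̂^n(𝒵^n ∖ A) ≤ (1/k)·(16/χ_2(Q_1‖Q_0) + 8·χ_3(Q_1‖Q_0)/χ_2(Q_1‖Q_0)^2 − 4). -/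
/-!
Let `ι` be an information set of the code: `k` coordinates on which `v ↦ v G` restricts to a
bijection onto `F₂ᵏ`. Under `Q̂ⁿ` the outputs on `ι` are then i.i.d. with law `(Q₀ + Q₁)/2`, and
under `Q₀^{⊗n}` they are i.i.d. with law `Q₀`. The test compares the statistic
`S(z) = ∑ᵢ (Q₁/Q₀ − 1)(z_{ι i})` with `kχ₂/4`, half-way between its means `0` and `kχ₂/2` under
the two hypotheses; Chebyshev's inequality with the variances `kχ₂` and
`k(χ₂ + χ₃/2 − χ₂²/4)` gives both error bounds.
-/

open Finset

/-- `P` is a probability mass function on a finite alphabet. -/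
def IsPMF {𝒵 : Type} [Fintype 𝒵] (P : 𝒵 → ℝ) : Prop :=
  (∀ z, 0 ≤ P z) ∧ ∑ z, P z = 1

/-- `n`-fold memoryless extension of the binary-input channel `W`:
`W^{⊗n}(z|x) = ∏_t W(z_t|x_t)`. -/
noncomputable def prodCh {𝒵 : Type} (W : Bool → 𝒵 → ℝ) (n : ℕ)
    (z : Fin n → 𝒵) (x : Fin n → Bool) : ℝ :=
  ∏ t, W (x t) (z t)

/-- `χ_t(Q1‖Q0) = ∑_z (Q1(z)-Q0(z))^t / Q0(z)^{t-1}`. -/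
noncomputable def chiDiv {𝒵 : Type} [Fintype 𝒵] (t : ℕ) (Q1 Q0 : 𝒵 → ℝ) : ℝ :=
  ∑ z, (Q1 z - Q0 z) ^ t / (Q0 z) ^ (t - 1)

theorem Finset.sum_le_sum_mul_sq_div_sq {α : Type*} [Fintype α] {s : Finset α}
    {μ g : α → ℝ} {θ : ℝ} (hμ : ∀ a, 0 ≤ μ a) (hθ : 0 < θ) (hs : ∀ a ∈ s, θ ≤ |g a|) :
    ∑ a ∈ s, μ a ≤ (∑ a, μ a * g a ^ 2) / θ ^ 2 := by
  rw [le_div_iff₀ (by positivity), sum_mul]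
  calc ∑ a ∈ s, μ a * θ ^ 2 ≤ ∑ a ∈ s, μ a * g a ^ 2 := by
        refine sum_le_sum fun a ha => mul_le_mul_of_nonneg_left ?_ (hμ a)
        simpa only [sq_abs] using pow_le_pow_left₀ hθ.le (hs a ha) 2
    _ ≤ ∑ a, μ a * g a ^ 2 :=
        sum_le_sum_of_subset_of_nonneg (subset_univ s) fun a _ _ => by have := hμ a; positivity

def IIDWithLaw {α 𝒵 : Type*} [Fintype α] [Fintype 𝒵] {k : ℕ} (μ : α → ℝ) (X : Fin k → α → 𝒵)
    (m : 𝒵 → ℝ) : Prop :=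
  ∀ h : Fin k → 𝒵 → ℝ, ∑ a, μ a * ∏ i, h i (X i a) = ∏ i, ∑ y, m y * h i y

namespace IIDWithLaw

variable {α 𝒵 : Type*} [Fintype α] [Fintype 𝒵] {k : ℕ} {μ : α → ℝ} {X : Fin k → α → 𝒵}
  {m : 𝒵 → ℝ}

theorem sum_mul_apply (hX : IIDWithLaw μ X m) (hm : ∑ y, m y = 1) (i : Fin k) (φ : 𝒵 → ℝ) :
    ∑ a, μ a * φ (X i a) = ∑ y, m y * φ y := by
  simpa [ite_apply, mul_ite, hm] using hX fun j => if j = i then φ else 1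

theorem sum_mul_mul_eq_zero (hX : IIDWithLaw μ X m) {g : 𝒵 → ℝ} (hg : ∑ y, m y * g y = 0)
    {i j : Fin k} (hij : i ≠ j) : ∑ a, μ a * (g (X i a) * g (X j a)) = 0 := by
  have h := hX fun l => if l = i ∨ l = j then g else 1
  have hlhs : ∀ a, ∏ l, (if l = i ∨ l = j then g else 1) (X l a) = g (X i a) * g (X j a) := by
    intro a
    simp only [ite_apply, Pi.one_apply]
    rw [← prod_filter, filter_or, filter_eq', filter_eq', if_pos (mem_univ _), if_pos (mem_univ _)]
    exact prod_pair hij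
  rw [← h.trans (prod_eq_zero (mem_univ i) (by simp [hg]))]
  simp only [hlhs]

theorem sum_mul_sum_sub_sq (hX : IIDWithLaw μ X m) (hm : ∑ y, m y = 1) (f : 𝒵 → ℝ) :
    ∑ a, μ a * (∑ i, f (X i a) - k * ∑ y, m y * f y) ^ 2
      = k * (∑ y, m y * f y ^ 2 - (∑ y, m y * f y) ^ 2) := by
  set E := ∑ y, m y * f y
  set g : 𝒵 → ℝ := fun y => f y - E
  have hg : ∑ y, m y * g y = 0 := by
    simp only [g, mul_sub, sum_sub_distrib, ← sum_mul, hm, one_mul, E, sub_self]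
  have hcenter : ∀ a, ∑ i, f (X i a) - k * E = ∑ i, g (X i a) := by
    simp [g, sum_sub_distrib]
  calc ∑ a, μ a * (∑ i, f (X i a) - k * E) ^ 2
      = ∑ i, ∑ j, ∑ a, μ a * (g (X i a) * g (X j a)) := by
        simp_rw [hcenter, sq, sum_mul_sum, mul_sum]
        rw [sum_comm]
        exact sum_congr rfl fun i _ => sum_comm
    _ = ∑ i, ∑ a, μ a * (g (X i a) * g (X i a)) :=
        sum_congr rfl fun i _ => sum_eq_single i
          (fun j _ hji => hX.sum_mul_mul_eq_zero hg (Ne.symm hji)) (by simp)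
    _ = ∑ _i : Fin k, ∑ y, m y * g y ^ 2 :=
        sum_congr rfl fun i _ => by simpa only [← sq] using hX.sum_mul_apply hm i (g · ^ 2)
    _ = k * (∑ y, m y * f y ^ 2 - E ^ 2) := by
        have hexpand : ∀ y, m y * g y ^ 2 = m y * f y ^ 2 - 2 * E * (m y * f y) + E ^ 2 * m y :=
          fun y => by ring
        simp only [hexpand, sum_add_distrib, sum_sub_distrib, ← mul_sum, hm, sum_const, card_univ,
          Fintype.card_fin, nsmul_eq_mul]
        ring

theorem sum_le_mul_variance_div_sq (hX : IIDWithLaw μ X m)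
    (hμ : ∀ a, 0 ≤ μ a) (hm : ∑ y, m y = 1) (f : 𝒵 → ℝ) {s : Finset α} {θ : ℝ} (hθ : 0 < θ)
    (hs : ∀ a ∈ s, θ ≤ |∑ i, f (X i a) - k * ∑ y, m y * f y|) :
    ∑ a ∈ s, μ a ≤ k * (∑ y, m y * f y ^ 2 - (∑ y, m y * f y) ^ 2) / θ ^ 2 := by
  rw [← hX.sum_mul_sum_sub_sq hm]
  exact sum_le_sum_mul_sq_div_sq hμ hθ hs

end IIDWithLaw

theorem sum_prod_mul_prod_comp_of_injective {𝒵 : Type*} [Fintype 𝒵] {n k : ℕ}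
    (P : Fin n → 𝒵 → ℝ) (hP : ∀ t, ∑ y, P t y = 1) {ι : Fin k → Fin n}
    (hι : Function.Injective ι) (h : Fin k → 𝒵 → ℝ) :
    ∑ z : Fin n → 𝒵, (∏ t, P t (z t)) * ∏ i, h i (z (ι i)) = ∏ i, ∑ y, P (ι i) y * h i y := by
  set H : Fin n → 𝒵 → ℝ := Function.extend ι h 1
  have hH : ∀ t ∉ Set.range ι, H t = 1 := fun t ht => Function.extend_apply' _ _ _ ht
  have hprod : ∀ z : Fin n → 𝒵, ∏ i, h i (z (ι i)) = ∏ t, H t (z t) := fun z =>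
    Fintype.prod_of_injective ι hι _ _ (fun t ht => by simp [hH t ht])
      (fun i => by simp [H, hι.extend_apply])
  simp only [hprod, ← prod_mul_distrib]
  rw [← Fintype.prod_sum fun t y => P t y * H t y]
  exact (Fintype.prod_of_injective ι hι _ _ (fun t ht => by simp [hH t ht, hP])
    (fun i => by simp [H, hι.extend_apply])).symm

theorem iidWithLaw_uniform_mixture {𝒵 B M : Type*} [Fintype 𝒵] [Fintype B] [Fintype M]
    {n k : ℕ} (V : B → 𝒵 → ℝ) (hV : ∀ b, ∑ y, V b y = 1) (x : M → Fin n → B)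
    {ι : Fin k → Fin n} (hι : Function.Injective ι)
    (hx : Function.Bijective fun v i => x v (ι i)) :
    IIDWithLaw (fun z : Fin n → 𝒵 => ((Fintype.card B : ℝ) ^ k)⁻¹ * ∑ v, ∏ t, V (x v t) (z t))
      (fun i z => z (ι i)) (fun y => (Fintype.card B : ℝ)⁻¹ * ∑ b, V b y) := by
  intro h
  set q : ℝ := (Fintype.card B : ℝ)
  calc ∑ z : Fin n → 𝒵, (q ^ k)⁻¹ * (∑ v, ∏ t, V (x v t) (z t)) * ∏ i, h i (z (ι i))
      = (q ^ k)⁻¹ * ∑ v, ∑ z : Fin n → 𝒵, (∏ t, V (x v t) (z t)) * ∏ i, h i (z (ι i)) := by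
        simp only [mul_assoc, sum_mul, ← mul_sum]
        rw [sum_comm]
    _ = (q ^ k)⁻¹ * ∑ v, ∏ i, ∑ y, V (x v (ι i)) y * h i y := by
        simp only [sum_prod_mul_prod_comp_of_injective _ (fun t => hV _) hι]
    _ = (q ^ k)⁻¹ * ∑ u : Fin k → B, ∏ i, ∑ y, V (u i) y * h i y := by
        rw [hx.sum_comp fun u => ∏ i, ∑ y, V (u i) y * h i y]
    _ = ∏ i, q⁻¹ * ∑ b, ∑ y, V b y * h i y := by
        rw [← Fintype.prod_sum fun i b => ∑ y, V b y * h i y, prod_mul_distrib, prod_const,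
          card_univ, Fintype.card_fin, inv_pow]
    _ = ∏ i, ∑ y, (q⁻¹ * ∑ b, V b y) * h i y := by
        simp only [mul_assoc, sum_mul, ← mul_sum]
        simp only [mul_sum]
        exact prod_congr rfl fun i _ => sum_comm

theorem Matrix.exists_injective_isUnit_submatrix_of_rank_eq {K : Type*} [Field K] {k n : ℕ}
    (G : Matrix (Fin k) (Fin n) K) (hG : G.rank = k) :
    ∃ ι : Fin k → Fin n, Function.Injective ι ∧ IsUnit (G.submatrix id ι) := by
  obtain ⟨κ, a, ha, hspan, hli⟩ := exists_linearIndependent' K G.col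
  have : Finite κ := Finite.of_injective a ha
  have : Fintype κ := Fintype.ofFinite κ
  have hcard : Fintype.card κ = k := by
    rw [← finrank_span_eq_card hli, hspan, ← Matrix.rank_eq_finrank_span_cols, hG]
  let e : Fin k ≃ κ := (Fintype.equivFinOfCardEq hcard).symm
  have hcols : LinearIndependent K (G.submatrix id (a ∘ e)).col := hli.comp e e.injective
  exact ⟨a ∘ e, ha.comp e.injective, Matrix.linearIndependent_cols_iff_isUnit.1 hcols⟩

theorem iidWithLaw_linearCode {𝒵 : Type} [Fintype 𝒵] {n k : ℕ} (W : Bool → 𝒵 → ℝ)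
    (hW : ∀ x, ∑ y, W x y = 1) (G : Matrix (Fin k) (Fin n) (ZMod 2)) {ι : Fin k → Fin n}
    (hι : Function.Injective ι) (hG : Function.Bijective fun v i => Matrix.vecMul v G (ι i)) :
    IIDWithLaw (fun z => ((2:ℝ) ^ k)⁻¹ * ∑ v : Fin k → ZMod 2,
        prodCh W n z fun t => if Matrix.vecMul v G t = 1 then true else false)
      (fun i z => z (ι i)) (fun y => (W false y + W true y) / 2) := by
  convert iidWithLaw_uniform_mixture (fun b : ZMod 2 => W (if b = 1 then true else false))
    (fun _ => hW _) (fun v t => Matrix.vecMul v G t) hι hG using 3 with z y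
  · simp [ZMod.card]
  · rfl
  · rw [ZMod.card, Nat.cast_ofNat, show (univ : Finset (ZMod 2)) = {0, 1} from rfl,
      sum_pair zero_ne_one]
    simp only [zero_ne_one, ↓reduceIte]
    ring

noncomputable def chiScore {𝒵 : Type*} (Q1 Q0 : 𝒵 → ℝ) (z : 𝒵) : ℝ :=
  (Q1 z - Q0 z) / Q0 z

section ChiDivergence

variable {𝒵 : Type} [Fintype 𝒵] {Q1 Q0 : 𝒵 → ℝ}

theorem chiDiv_eq_sum_mul_chiScore_pow (hQ0 : ∀ z, Q0 z ≠ 0) {t : ℕ} (ht : 1 ≤ t) :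
    chiDiv t Q1 Q0 = ∑ z, Q0 z * chiScore Q1 Q0 z ^ t := by
  obtain ⟨s, rfl⟩ := Nat.exists_eq_add_of_le' ht
  refine sum_congr rfl fun z _ => ?_
  have := hQ0 z
  rw [chiScore, div_pow, Nat.add_sub_cancel, pow_succ (Q0 z)]
  field_simp

theorem chiDiv_one_eq_zero (h : ∑ z, Q1 z = ∑ z, Q0 z) : chiDiv 1 Q1 Q0 = 0 := by
  simp [chiDiv, sum_sub_distrib, h]

theorem sum_midpoint_mul_chiScore_pow (hQ0 : ∀ z, Q0 z ≠ 0) {t : ℕ} (ht : 1 ≤ t) :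
    ∑ z, (Q0 z + Q1 z) / 2 * chiScore Q1 Q0 z ^ t = chiDiv t Q1 Q0 + chiDiv (t + 1) Q1 Q0 / 2 := by
  rw [chiDiv_eq_sum_mul_chiScore_pow hQ0 ht, chiDiv_eq_sum_mul_chiScore_pow hQ0 (by omega),
    sum_div, ← sum_add_distrib]
  refine sum_congr rfl fun z _ => ?_
  have hscore : Q0 z * chiScore Q1 Q0 z = Q1 z - Q0 z := mul_div_cancel₀ _ (hQ0 z)
  linear_combination (-chiScore Q1 Q0 z ^ t / 2) * hscore

theorem chiDiv_two_pos (hQ0 : ∀ z, 0 < Q0 z) (hne : Q1 ≠ Q0) : 0 < chiDiv 2 Q1 Q0 := by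
  obtain ⟨z₀, hz₀⟩ := Function.ne_iff.mp hne
  refine sum_pos' (fun z _ => by have := hQ0 z; positivity) ⟨z₀, mem_univ z₀, ?_⟩
  have := sub_ne_zero.mpr hz₀
  have := hQ0 z₀
  positivity

end ChiDivergence

noncomputable def chiStat {α 𝒵 : Type*} {k : ℕ} (Q1 Q0 : 𝒵 → ℝ) (X : Fin k → α → 𝒵) (a : α) :
    ℝ :=
  ∑ i, chiScore Q1 Q0 (X i a)

namespace IIDWithLaw

variable {α 𝒵 : Type} [Fintype α] [Fintype 𝒵] {k : ℕ} {μ : α → ℝ} {X : Fin k → α → 𝒵}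
  {Q1 Q0 : 𝒵 → ℝ}

theorem sum_chiStat_ge_le (hX : IIDWithLaw μ X Q0) (hμ : ∀ a, 0 ≤ μ a)
    (hQ0 : ∀ z, Q0 z ≠ 0) (hQ1sum : ∑ z, Q1 z = 1) (hQ0sum : ∑ z, Q0 z = 1)
    (hc : 0 < chiDiv 2 Q1 Q0) (hk : 0 < k) :
    ∑ a ∈ univ.filter (fun a => k * chiDiv 2 Q1 Q0 / 4 ≤ chiStat Q1 Q0 X a), μ a
      ≤ 16 / (k * chiDiv 2 Q1 Q0) := by
  have hmean : ∑ z, Q0 z * chiScore Q1 Q0 z = 0 := by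
    rw [← chiDiv_one_eq_zero (hQ1sum.trans hQ0sum.symm), chiDiv_eq_sum_mul_chiScore_pow hQ0 le_rfl]
    simp only [pow_one]
  have hvar : ∑ z, Q0 z * chiScore Q1 Q0 z ^ 2 = chiDiv 2 Q1 Q0 :=
    (chiDiv_eq_sum_mul_chiScore_pow hQ0 one_le_two).symm
  have hθ : 0 < (k : ℝ) * chiDiv 2 Q1 Q0 / 4 := by positivity
  refine (hX.sum_le_mul_variance_div_sq hμ hQ0sum (chiScore Q1 Q0) hθ fun a ha => ?_).trans_eq ?_
  · rw [hmean, mul_zero, sub_zero]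
    exact (mem_filter.1 ha).2.trans (le_abs_self (chiStat Q1 Q0 X a))
  · rw [hmean, hvar]
    field_simp
    ring

theorem sum_chiStat_lt_le [DecidableEq α] (hX : IIDWithLaw μ X fun z => (Q0 z + Q1 z) / 2)
    (hμ : ∀ a, 0 ≤ μ a) (hQ0 : ∀ z, Q0 z ≠ 0) (hQ1sum : ∑ z, Q1 z = 1)
    (hQ0sum : ∑ z, Q0 z = 1) (hc : 0 < chiDiv 2 Q1 Q0) (hk : 0 < k) :
    ∑ a ∈ (univ.filter (fun a => k * chiDiv 2 Q1 Q0 / 4 ≤ chiStat Q1 Q0 X a))ᶜ, μ a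
      ≤ 1 / k * (16 / chiDiv 2 Q1 Q0 + 8 * chiDiv 3 Q1 Q0 / chiDiv 2 Q1 Q0 ^ 2 - 4) := by
  have hmean : ∑ z, (Q0 z + Q1 z) / 2 * chiScore Q1 Q0 z = chiDiv 2 Q1 Q0 / 2 := by
    simpa only [pow_one, chiDiv_one_eq_zero (hQ1sum.trans hQ0sum.symm), zero_add,
      Nat.reduceAdd] using sum_midpoint_mul_chiScore_pow (Q1 := Q1) hQ0 le_rfl
  have hvar := sum_midpoint_mul_chiScore_pow (Q1 := Q1) hQ0 one_le_two
  have hθ : 0 < (k : ℝ) * chiDiv 2 Q1 Q0 / 4 := by positivity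
  refine (hX.sum_le_mul_variance_div_sq hμ
    (by rw [← sum_div, sum_add_distrib, hQ0sum, hQ1sum]; norm_num)
    (chiScore Q1 Q0) hθ fun a ha => ?_).trans_eq ?_
  · have : chiStat Q1 Q0 X a < k * chiDiv 2 Q1 Q0 / 4 := by simpa using ha
    rw [hmean]
    exact le_abs.2 (Or.inr (by unfold chiStat at this; linarith))
  · rw [hmean, hvar]
    field_simp
    ring

end IIDWithLaw

theorem stmt0_general {𝒵 : Type} [Fintype 𝒵] [DecidableEq 𝒵]
    (W : Bool → 𝒵 → ℝ) (hW : ∀ x, IsPMF (W x))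
    (hQ0pos : ∀ z, 0 < W false z) (hneq : W true ≠ W false)
    (n k : ℕ) (hk1 : 1 ≤ k)
    (G : Matrix (Fin k) (Fin n) (ZMod 2)) (hrank : G.rank = k) :
    ∃ A : Finset (Fin n → 𝒵),
      (∑ z ∈ A, prodCh W n z (fun _ => false))
          ≤ 16 / (k * chiDiv 2 (W true) (W false)) ∧
      (∑ z ∈ Aᶜ, ((2:ℝ)^k)⁻¹ * ∑ v : Fin k → ZMod 2,
          prodCh W n z (fun t => if Matrix.vecMul v G t = 1 then true else false))
        ≤ (1/(k:ℝ)) * (16 / chiDiv 2 (W true) (W false)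
            + 8 * chiDiv 3 (W true) (W false) / (chiDiv 2 (W true) (W false))^2 - 4) := by
  obtain ⟨ι, hι, hunit⟩ := G.exists_injective_isUnit_submatrix_of_rank_eq hrank
  have hsum : ∀ x, ∑ y, W x y = 1 := fun x => (hW x).2
  have hQ0 : ∀ y, W false y ≠ 0 := fun y => (hQ0pos y).ne'
  have hc := chiDiv_two_pos hQ0pos hneq
  have hnull : IIDWithLaw (fun z => prodCh W n z fun _ => false) (fun i z => z (ι i)) (W false) :=
    sum_prod_mul_prod_comp_of_injective (fun _ => W false) (fun _ => hsum false) hι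
  have hcode := iidWithLaw_linearCode W hsum G hι
    ⟨Matrix.vecMul_injective_iff_isUnit.2 hunit, Matrix.vecMul_surjective_iff_isUnit.2 hunit⟩
  refine ⟨_, hnull.sum_chiStat_ge_le (fun z => prod_nonneg fun t _ => (hQ0pos _).le) hQ0
    (hsum true) (hsum false) hc hk1, hcode.sum_chiStat_lt_le (fun z => ?_) hQ0 (hsum true)
    (hsum false) hc hk1⟩
  exact mul_nonneg (by positivity) (sum_nonneg fun v _ => prod_nonneg fun t _ => (hW _).1 _)

/-- Proposition 1: for any `(n,k)` binary linear code of rank `k` used with uniform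
messages over a BI-DMC, there is a hypothesis test with false-alarm probability at most
`16/(k χ₂(Q1‖Q0))` and missed-detection probability at most
`(1/k)(16/χ₂ + 8χ₃/χ₂² − 4)`. -/
theorem stmt0 {𝒵 : Type} [Fintype 𝒵] [DecidableEq 𝒵]
    (W : Bool → 𝒵 → ℝ) (hW : ∀ x, IsPMF (W x))
    (hQ0pos : ∀ z, 0 < W false z) (hneq : W true ≠ W false)
    (n k : ℕ) (hk1 : 1 ≤ k) (hkn : k ≤ n)
    (G : Matrix (Fin k) (Fin n) (ZMod 2)) (hrank : G.rank = k) :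
    ∃ A : Finset (Fin n → 𝒵),
      (∑ z ∈ A, prodCh W n z (fun _ => false))
          ≤ 16 / (k * chiDiv 2 (W true) (W false)) ∧
      (∑ z ∈ Aᶜ, ((2:ℝ)^k)⁻¹ * ∑ v : Fin k → ZMod 2,
          prodCh W n z (fun t => if Matrix.vecMul v G t = 1 then true else false))
        ≤ (1/(k:ℝ)) * (16 / chiDiv 2 (W true) (W false)
            + 8 * chiDiv 3 (W true) (W false) / (chiDiv 2 (W true) (W false))^2 - 4) :=
  stmt0_general W hW hQ0pos hneq n k hk1 G hrank
end

section
/- Let W be a binary-input discrete memoryless channel with finite output alphabet 𝒵, with Q_0 = W(·|0) everywhere positive and Q_1 = W(·|1) ≠ Q_0. For each n ∈ ℕ* let G_n ∈ F_2^{k_n×n} have rank k_n with 1 ≤ k_n ≤ n, and let Q̂^n(z) = 2^{−k_n} Σ_{v∈F_2^{k_n}} W^{⊗n}(z | vG_n). If k_n → ∞ as n → ∞, then there exist sets A_n ⊆ 𝒵^n such that lim_{n→∞} Q_0^{⊗n}(A_n) = 0 and lim_{n→∞} Q̂^n(𝒵^n ∖ A_n) = 0; i.e., a family of (n,k_n)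 linear codes with k_n → ∞ used with uniform messages cannot be covert. -/
/-!
Choose an output letter `z₀` with `Q₁(z₀) ≠ Q₀(z₀)`. A generator matrix of full rank `k` has an
information set: `k` coordinates `S` on which `v ↦ vG` is a bijection onto `𝔽₂^S`. With uniform
messages the channel outputs on `S` are therefore i.i.d. with law `(Q₀ + Q₁)/2`, whereas under
`Q₀^{⊗n}` they are i.i.d. `Q₀`. Count the occurrences of `z₀` on `S` and threshold halfway between
the two means `k Q₀(z₀)` and `k (Q₀(z₀) + Q₁(z₀))/2`; by Chebyshev both error probabilities are
`O(1/k)`.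
-/

open Finset

open Matrix Filter Topology

theorem Matrix.exists_finset_bijective_restrict_vecMul {K m ι : Type*} [Field K] [Fintype m]
    [Fintype ι] (G : Matrix m ι K) (hG : G.rank = Fintype.card m) :
    ∃ S : Finset ι, S.card = Fintype.card m ∧ Function.Bijective fun v => S.restrict (v ᵥ* G) := by
  classical
  obtain ⟨b, -, -, hb_span, hb_li⟩ :=
    exists_linearIndepOn_extension (linearIndepOn_empty K G.col) (Set.subset_univ _)
  have hcols : Submodule.span K (Set.range G.col) = ⊤ := Submodule.eq_top_of_finrank_eq <| by
    rw [← rank_eq_finrank_span_cols, hG, Module.finrank_fintype_fun_eq_card]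
  have hb_top : Submodule.span K (G.col '' b) = ⊤ :=
    top_unique (hcols ▸ Submodule.span_le.mpr (Set.image_univ ▸ hb_span))
  refine ⟨b.toFinset, ?_⟩
  let L : (m → K) →ₗ[K] b.toFinset → K :=
    LinearMap.funLeft K K (Subtype.val : b.toFinset → ι) ∘ₗ G.vecMulLinear
  have hinj : Function.Injective L := by
    rw [← LinearMap.ker_eq_bot, LinearMap.ker_eq_bot']
    intro v hv
    refine dotProduct_eq_zero v fun w => ?_
    have hw : w ∈ Submodule.span K (G.col '' b) := hb_top ▸ Submodule.mem_top
    induction hw using Submodule.span_induction with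
    | mem x hx =>
      obtain ⟨t, ht, rfl⟩ := hx
      exact congrFun hv ⟨t, Set.mem_toFinset.mpr ht⟩
    | zero => exact dotProduct_zero v
    | add x y _ _ hx hy => rw [dotProduct_add, hx, hy, add_zero]
    | smul c x _ hx => rw [dotProduct_smul, hx, smul_zero]
  have hdim : Module.finrank K (m → K) = Module.finrank K (b.toFinset → K) := by
    have := finrank_span_eq_card hb_li
    rw [← Set.image_eq_range, hb_top, finrank_top] at this
    simp [this]
  refine ⟨by simpa using hdim.symm, hinj,
    (LinearMap.injective_iff_surjective_of_finrank_eq_finrank hdim).mp hinj⟩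

theorem sum_filter_le_sum_mul_sq_div {α : Type*} [Fintype α] (μ : α → ℝ) (hμ : ∀ a, 0 ≤ μ a)
    (T : α → ℝ) {d : ℝ} (hd : 0 < d) :
    ∑ a with d ≤ |T a|, μ a ≤ (∑ a, μ a * T a ^ 2) / d ^ 2 := by
  have hterm (a) : 0 ≤ μ a * T a ^ 2 / d ^ 2 := by have := hμ a; positivity
  calc ∑ a with d ≤ |T a|, μ a
      ≤ ∑ a with d ≤ |T a|, μ a * T a ^ 2 / d ^ 2 := by
        refine sum_le_sum fun a ha => (le_div_iff₀ (by positivity)).2 ?_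
        have hdT : d ^ 2 ≤ T a ^ 2 := sq_abs (T a) ▸ pow_le_pow_left₀ hd.le (mem_filter.1 ha).2 2
        exact mul_le_mul_of_nonneg_left hdT (hμ a)
    _ ≤ ∑ a, μ a * T a ^ 2 / d ^ 2 :=
        sum_le_sum_of_subset_of_nonneg (filter_subset _ _) fun a _ _ => hterm a
    _ = (∑ a, μ a * T a ^ 2) / d ^ 2 := (sum_div _ _ _).symm

theorem sum_filter_not_le_abs_sub_le {α : Type*} [Fintype α] (μ : α → ℝ) (hμ : ∀ a, 0 ≤ μ a)
    (T : α → ℝ) {m₀ m₁ d : ℝ} (hm : 2 * d ≤ |m₁ - m₀|) :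
    ∑ a with ¬ d ≤ |T a - m₀|, μ a ≤ ∑ a with d ≤ |T a - m₁|, μ a := by
  refine sum_le_sum_of_subset_of_nonneg (fun a ha => ?_) fun a _ _ => hμ a
  simp only [mem_filter, mem_univ, true_and, not_le] at ha ⊢
  linarith [abs_sub_le m₁ (T a) m₀, abs_sub_comm m₁ (T a)]

section ProductWeights

variable {ι 𝒵 : Type} [Fintype ι] [DecidableEq ι] [Fintype 𝒵]

theorem sum_prod_mul_prod (P φ : ι → 𝒵 → ℝ) :
    ∑ z : ι → 𝒵, (∏ t, P t (z t)) * ∏ t, φ t (z t) = ∏ t, ∑ x, P t x * φ t x := by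
  simp_rw [← prod_mul_distrib]
  exact (Fintype.prod_sum fun t x => P t x * φ t x).symm

theorem sum_prod_mul_apply (P : ι → 𝒵 → ℝ) (hP : ∀ t, ∑ x, P t x = 1) (g : 𝒵 → ℝ) (s : ι) :
    ∑ z : ι → 𝒵, (∏ t, P t (z t)) * g (z s) = ∑ x, P s x * g x := by
  simpa [ite_apply, apply_ite, hP] using sum_prod_mul_prod P (fun t => if t = s then g else 1)

theorem sum_prod_mul_apply_mul_apply (P : ι → 𝒵 → ℝ) (hP : ∀ t, ∑ x, P t x = 1)
    (g h : 𝒵 → ℝ) {s t : ι} (hst : s ≠ t) :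
    ∑ z : ι → 𝒵, (∏ u, P u (z u)) * (g (z s) * h (z t)) =
      (∑ x, P s x * g x) * ∑ x, P t x * h x := by
  let φ : ι → 𝒵 → ℝ := fun u => if u = s then g else if u = t then h else 1
  have hφ (u : ι) (hu : u ≠ s ∧ u ≠ t) : φ u = 1 := by simp [φ, hu.1, hu.2]
  have key := sum_prod_mul_prod P φ
  rw [Fintype.prod_eq_mul s t hst fun u hu => by simp [hφ u hu, hP]] at key
  convert key using 3 with z
  · rw [Fintype.prod_eq_mul s t hst fun u hu => by simp [hφ u hu]]
    simp [φ, hst.symm]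
  · simp [φ]
  · simp [φ, hst.symm]

theorem sum_prod_mul_sum_sub_sq (P : 𝒵 → ℝ) (hP : ∑ x, P x = 1) (f : 𝒵 → ℝ) :
    ∑ y : ι → 𝒵, (∏ t, P (y t)) * (∑ t, f (y t) - Fintype.card ι * ∑ x, P x * f x) ^ 2 =
      Fintype.card ι * ∑ x, P x * (f x - ∑ x, P x * f x) ^ 2 := by
  set m := ∑ x, P x * f x
  set h : 𝒵 → ℝ := fun x => f x - m
  have hmean : ∑ x, P x * h x = 0 := by simp [h, mul_sub, sum_sub_distrib, ← sum_mul, hP, m]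
  have hcov (s t : ι) : ∑ y : ι → 𝒵, (∏ u, P (y u)) * (h (y s) * h (y t)) =
      if s = t then ∑ x, P x * h x ^ 2 else 0 := by
    split_ifs with hst
    · subst hst
      simp_rw [← sq]
      exact sum_prod_mul_apply (fun _ => P) (fun _ => hP) (fun x => h x ^ 2) s
    · rw [sum_prod_mul_apply_mul_apply (fun _ => P) (fun _ => hP) h h hst, hmean, zero_mul]
  have hcentered (y : ι → 𝒵) : ∑ t, f (y t) - Fintype.card ι * m = ∑ t, h (y t) := by
    simp [h, sum_sub_distrib]
  have hsq (y : ι → 𝒵) : (∑ t, h (y t)) ^ 2 = ∑ s, ∑ t, h (y s) * h (y t) := by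
    rw [sq, sum_mul_sum]
  simp_rw [hcentered, hsq, mul_sum]
  rw [sum_comm]
  simp_rw [sum_comm (s := (univ : Finset (ι → 𝒵))), hcov, sum_ite_eq, if_pos (mem_univ _),
    sum_const, card_univ, nsmul_eq_mul]
  exact mul_sum _ _ _

theorem IsPMF.average {α : Type*} [Fintype α] [Nonempty α] {W : α → 𝒵 → ℝ}
    (hW : ∀ a, IsPMF (W a)) : IsPMF fun x => (Fintype.card α : ℝ)⁻¹ * ∑ a, W a x := by
  refine ⟨fun x => mul_nonneg (by positivity) (sum_nonneg fun a _ => (hW a).1 x), ?_⟩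
  rw [← mul_sum, sum_comm]
  simp [(hW _).2]

theorem IsPMF.sum_prod_filter_le_card_div_sq {P : 𝒵 → ℝ} (hP : IsPMF P) {f : 𝒵 → ℝ}
    (hf : ∀ x, f x ∈ Set.Icc (0 : ℝ) 1) {m : ℝ} (hm : ∑ x, P x * f x = m) {d : ℝ} (hd : 0 < d) :
    ∑ y : ι → 𝒵 with d ≤ |∑ t, f (y t) - Fintype.card ι * m|, ∏ t, P (y t) ≤
      Fintype.card ι / d ^ 2 := by
  have hm0 : 0 ≤ m := hm ▸ sum_nonneg fun x _ => mul_nonneg (hP.1 x) (hf x).1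
  have hm1 : m ≤ 1 := hm ▸ hP.2 ▸ sum_le_sum fun x _ => mul_le_of_le_one_right (hP.1 x) (hf x).2
  have hvar : ∑ x, P x * (f x - m) ^ 2 ≤ 1 := by
    refine hP.2 ▸ sum_le_sum fun x _ => mul_le_of_le_one_right (hP.1 x) ?_
    have := hf x
    exact sq_le_one_iff_abs_le_one _ |>.mpr (abs_le.mpr ⟨by linarith [this.1], by linarith [this.2]⟩)
  refine (sum_filter_le_sum_mul_sq_div _ (fun y => prod_nonneg fun t _ => hP.1 _) _ hd).trans ?_
  rw [← hm, sum_prod_mul_sum_sub_sq P hP.2 f, hm]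
  gcongr
  exact mul_le_of_le_one_right (Nat.cast_nonneg _) hvar

theorem sum_filter_restrict_prod (P : ι → 𝒵 → ℝ) (hP : ∀ t, ∑ x, P t x = 1) (S : Finset ι)
    (p : (S → 𝒵) → Prop) [DecidablePred p] :
    ∑ z : ι → 𝒵 with p (S.restrict z), ∏ t, P t (z t) =
      ∑ y : S → 𝒵 with p y, ∏ t : S, P t (y t) := by
  let e := Equiv.piEquivPiSubtypeProd (· ∈ S) (fun _ : ι => 𝒵)
  have hrestrict (y w) : S.restrict (e.symm (y, w)) = y := by ext; simp [e]
  have hprod (y w) : ∏ t, P t (e.symm (y, w) t) =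
      (∏ t : S, P t (y t)) * ∏ t : {t // t ∉ S}, P t (w t) := by
    simp only [e, Equiv.piEquivPiSubtypeProd_symm_apply, apply_dite (P _)]
    rw [Fintype.prod_dite]
    congr
    exact Subsingleton.elim _ _
  have hcompl : ∑ w : {t // t ∉ S} → 𝒵, ∏ t : {t // t ∉ S}, P t (w t) = 1 := by
    rw [← Fintype.prod_sum]
    simp [hP]
  rw [sum_filter, ← e.symm.sum_comp, Fintype.sum_prod_type, sum_filter]
  simp_rw [hrestrict]
  refine sum_congr rfl fun y _ => ?_
  split_ifs
  · simp_rw [hprod, ← mul_sum, hcompl, mul_one]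
  · exact sum_const_zero

theorem sum_filter_restrict_uniform_mixture {α V : Type*} [Fintype α] [Fintype V]
    (W : α → 𝒵 → ℝ) (hW : ∀ a, ∑ x, W a x = 1) (x : V → ι → α) (S : Finset ι)
    (hx : Function.Bijective fun v => S.restrict (x v)) (p : (S → 𝒵) → Prop) [DecidablePred p] :
    ∑ z : ι → 𝒵 with p (S.restrict z), (Fintype.card V : ℝ)⁻¹ * ∑ v, ∏ t, W (x v t) (z t) =
      ∑ y : S → 𝒵 with p y, ∏ t : S, (Fintype.card α : ℝ)⁻¹ * ∑ a, W a (y t) := by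
  have hcard : Fintype.card V = Fintype.card α ^ S.card := by
    rw [Fintype.card_of_bijective hx, Fintype.card_fun, Fintype.card_coe]
  rw [← mul_sum, sum_comm]
  simp_rw [sum_filter_restrict_prod (fun t => W (x _ t)) (fun _ => hW _) S p]
  rw [Fintype.sum_bijective _ hx (fun v => ∑ y : S → 𝒵 with p y, ∏ t : S, W (x v t) (y t))
    (fun u => ∑ y : S → 𝒵 with p y, ∏ t : S, W (u t) (y t)) fun v => rfl, sum_comm, mul_sum]
  refine sum_congr rfl fun y _ => ?_
  rw [prod_mul_distrib, prod_const, Fintype.prod_sum, hcard, card_univ, Fintype.card_coe]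
  push_cast
  rw [inv_pow]

end ProductWeights

theorem prodCh_nonneg {𝒵 : Type} {W : Bool → 𝒵 → ℝ} (hW : ∀ x z, 0 ≤ W x z) (n : ℕ)
    (z : Fin n → 𝒵) (x : Fin n → Bool) : 0 ≤ prodCh W n z x :=
  prod_nonneg fun _ _ => hW _ _

theorem exists_test_of_rank_eq {𝒵 : Type} [Fintype 𝒵] [DecidableEq 𝒵] (W : Bool → 𝒵 → ℝ)
    (hW : ∀ x, IsPMF (W x)) {z₀ : 𝒵} (hz₀ : W true z₀ ≠ W false z₀) {κ n : ℕ} (hκ : 0 < κ)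
    (G : Matrix (Fin κ) (Fin n) (ZMod 2)) (hG : G.rank = κ) :
    ∃ A : Finset (Fin n → 𝒵),
      ∑ z ∈ A, prodCh W n z (fun _ => false) ≤ 16 / (W true z₀ - W false z₀) ^ 2 / κ ∧
      ∑ z ∈ Aᶜ, ((2:ℝ) ^ κ)⁻¹ * ∑ v : Fin κ → ZMod 2,
          prodCh W n z (fun t => if (v ᵥ* G) t = 1 then true else false) ≤
        16 / (W true z₀ - W false z₀) ^ 2 / κ := by
  classical
  obtain ⟨S, hSκ, hS⟩ := G.exists_finset_bijective_restrict_vecMul (by rw [hG, Fintype.card_fin])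
  rw [Fintype.card_fin, ← Fintype.card_coe] at hSκ
  have hbit : Function.Bijective fun c : ZMod 2 => if c = 1 then true else false := by decide
  set f : 𝒵 → ℝ := fun x => if x = z₀ then 1 else 0
  have hf (x : 𝒵) : f x ∈ Set.Icc (0 : ℝ) 1 := by by_cases h : x = z₀ <;> simp [f, h]
  have hmean (P : 𝒵 → ℝ) : ∑ x, P x * f x = P z₀ := by simp [f]
  set R : 𝒵 → ℝ := fun x => (Fintype.card Bool : ℝ)⁻¹ * ∑ a, W a x
  have hR : IsPMF R := IsPMF.average hW
  have hRz : R z₀ - W false z₀ = (W true z₀ - W false z₀) / 2 := by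
    simp only [R, Fintype.card_bool, Fintype.sum_bool]
    ring
  set d := Fintype.card S * |R z₀ - W false z₀| / 2
  have hd : 0 < d := by
    have : 0 < |R z₀ - W false z₀| :=
      abs_pos.2 (hRz ▸ div_ne_zero (sub_ne_zero.2 hz₀) two_ne_zero)
    have : (0 : ℝ) < Fintype.card S := by exact_mod_cast hSκ ▸ hκ
    positivity
  have hbound : Fintype.card S / d ^ 2 = 16 / (W true z₀ - W false z₀) ^ 2 / κ := by
    have : W true z₀ - W false z₀ ≠ 0 := sub_ne_zero.2 hz₀
    simp only [d, hRz, hSκ, div_pow, mul_pow, sq_abs]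
    field_simp
    ring
  refine ⟨univ.filter fun z => d ≤ |∑ t, f (S.restrict z t) - Fintype.card S * W false z₀|,
    ?_, ?_⟩
  · rw [← hbound]
    calc _ = ∑ y : S → 𝒵 with d ≤ |∑ t, f (y t) - Fintype.card S * W false z₀|,
          ∏ t : S, W false (y t) :=
          sum_filter_restrict_prod (fun _ => W false) (fun _ => (hW false).2) S _
      _ ≤ _ := (hW false).sum_prod_filter_le_card_div_sq hf (hmean _) hd
  · have hcard : ((Fintype.card (Fin κ → ZMod 2) : ℕ) : ℝ) = 2 ^ κ := by simp
    rw [← hbound, compl_filter, ← hcard]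
    calc _ = ∑ y : S → 𝒵 with ¬ d ≤ |∑ t, f (y t) - Fintype.card S * W false z₀|,
          ∏ t : S, R (y t) :=
          sum_filter_restrict_uniform_mixture W (fun a => (hW a).2) _ S (hbit.comp_left.comp hS) _
      _ ≤ ∑ y : S → 𝒵 with d ≤ |∑ t, f (y t) - Fintype.card S * R z₀|, ∏ t : S, R (y t) := by
          refine sum_filter_not_le_abs_sub_le _ (fun _ => prod_nonneg fun _ _ => hR.1 _) _ ?_
          rw [← mul_sub, abs_mul, Nat.abs_cast]
          exact (by ring : 2 * d = _).le
      _ ≤ _ := hR.sum_prod_filter_le_card_div_sq hf (hmean _) hd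

theorem stmt1_general {𝒵 : Type} [Fintype 𝒵] [DecidableEq 𝒵]
    (W : Bool → 𝒵 → ℝ) (hW : ∀ x, IsPMF (W x))
    (hneq : W true ≠ W false)
    (k : ℕ → ℕ)
    (G : ∀ n, Matrix (Fin (k n)) (Fin n) (ZMod 2))
    (hrank : ∀ n, 1 ≤ n → (G n).rank = k n)
    (hkinf : Filter.Tendsto k Filter.atTop Filter.atTop) :
    ∃ A : ∀ n, Finset (Fin n → 𝒵),
      Filter.Tendsto (fun n => ∑ z ∈ A n, prodCh W n z (fun _ => false))
        Filter.atTop (nhds 0) ∧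
      Filter.Tendsto (fun n => ∑ z ∈ (A n)ᶜ, ((2:ℝ)^(k n))⁻¹ * ∑ v : Fin (k n) → ZMod 2,
          prodCh W n z (fun t => if Matrix.vecMul v (G n) t = 1 then true else false))
        Filter.atTop (nhds 0) := by
  obtain ⟨z₀, hz₀⟩ := Function.ne_iff.mp hneq
  set C := 16 / (W true z₀ - W false z₀) ^ 2
  have htest (n : ℕ) : ∃ A : Finset (Fin n → 𝒵), 1 ≤ n ∧ 0 < k n →
      ∑ z ∈ A, prodCh W n z (fun _ => false) ≤ C / k n ∧
      ∑ z ∈ Aᶜ, ((2:ℝ) ^ k n)⁻¹ * ∑ v : Fin (k n) → ZMod 2,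
          prodCh W n z (fun t => if (v ᵥ* G n) t = 1 then true else false) ≤ C / k n := by
    by_cases hn : 1 ≤ n ∧ 0 < k n
    · obtain ⟨A, hA⟩ := exists_test_of_rank_eq W hW hz₀ hn.2 (G n) (hrank n hn.1)
      exact ⟨A, fun _ => hA⟩
    · exact ⟨∅, fun h => absurd h hn⟩
  choose A hA using htest
  have hlarge : ∀ᶠ n in atTop, 1 ≤ n ∧ 0 < k n :=
    (eventually_ge_atTop 1).and (hkinf.eventually_gt_atTop 0)
  have hC : Tendsto (fun n => C / k n) atTop (𝓝 0) :=
    (tendsto_const_div_atTop_nhds_zero_nat C).comp hkinf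
  have hW0 (x z) : 0 ≤ W x z := (hW x).1 z
  refine ⟨A, squeeze_zero' (.of_forall fun n => ?_) (hlarge.mono fun n hn => (hA n hn).1) hC,
    squeeze_zero' (.of_forall fun n => ?_) (hlarge.mono fun n hn => (hA n hn).2) hC⟩
  · exact sum_nonneg fun z _ => prodCh_nonneg hW0 n z _
  · exact sum_nonneg fun z _ =>
      mul_nonneg (by positivity) (sum_nonneg fun v _ => prodCh_nonneg hW0 n z _)

/-- Corollary 1: a family of `(n, k_n)` linear codes with `k_n → ∞`, used with uniform
messages over a BI-DMC, cannot be covert: there are tests whose false-alarm and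
missed-detection probabilities both tend to `0`. -/
theorem stmt1 {𝒵 : Type} [Fintype 𝒵] [DecidableEq 𝒵]
    (W : Bool → 𝒵 → ℝ) (hW : ∀ x, IsPMF (W x))
    (hQ0pos : ∀ z, 0 < W false z) (hneq : W true ≠ W false)
    (k : ℕ → ℕ) (hk1 : ∀ n, 1 ≤ n → 1 ≤ k n) (hkn : ∀ n, 1 ≤ n → k n ≤ n)
    (G : ∀ n, Matrix (Fin (k n)) (Fin n) (ZMod 2))
    (hrank : ∀ n, 1 ≤ n → (G n).rank = k n)
    (hkinf : Filter.Tendsto k Filter.atTop Filter.atTop) :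
    ∃ A : ∀ n, Finset (Fin n → 𝒵),
      Filter.Tendsto (fun n => ∑ z ∈ A n, prodCh W n z (fun _ => false))
        Filter.atTop (nhds 0) ∧
      Filter.Tendsto (fun n => ∑ z ∈ (A n)ᶜ, ((2:ℝ)^(k n))⁻¹ * ∑ v : Fin (k n) → ZMod 2,
          prodCh W n z (fun t => if Matrix.vecMul v (G n) t = 1 then true else false))
        Filter.atTop (nhds 0) :=
  stmt1_general W hW hneq k G hrank hkinf
end

section
/- Let W be a binary-input discrete memoryless channel with finite output alphabet 𝒵, with Q_0 = W(·|0) everywhere positive and Q_1 = W(·|1) ≠ Q_0. Let G ∈ F_2^{k×n} have rank k, let Q̂^n(z) = 2^{−k} Σ_{v∈F_2^k} W^{⊗n}(z | vG), let m be the number of nonzero columns of G, and set μ = m/(2n) and Q̃ = μ·Q_1 + (1−μ)·Q_0. If D(Q̂^n ‖ Q_0^{⊗n}) ≤ δ for some δ > 0, then δ/n ≥ D(Q̃‖Q_0) ≥ V(Q̃,Q_0)^2 = (μ·V(Q_1,Q_0))^2; consequently μ ≤ (1/V(Q_1,Q_0))·√(δ/n) and m ≤ (2/V(Q_1,Q_0))·√(nδ)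 (a square-root law for the weight of linear codes). -/
open Finset

/-- Kullback–Leibler divergence (natural logarithm) between pmfs on a finite alphabet. -/
noncomputable def KL {𝒵 : Type} [Fintype 𝒵] (P Q : 𝒵 → ℝ) : ℝ :=
  ∑ z, P z * Real.log (P z / Q z)

/-- Total variation distance `V(P,Q) = (1/2)∑_z |P(z)−Q(z)|`. -/
noncomputable def TV {𝒵 : Type} [Fintype 𝒵] (P Q : 𝒵 → ℝ) : ℝ :=
  (1/2) * ∑ z, |P z - Q z|

/-!
Averaging the `n` single-letter marginals of the output distribution `P` of the code gives
exactly `Q̃`: a nonzero column of `G` carries a uniform bit (a nonzero linear functional on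
`F₂ᵏ` is balanced), a zero column always carries `0`. For the averaged marginal `Q̃` the chain
rule `D(P ‖ Q₀^{⊗n}) = D(P ‖ Q̃^{⊗n}) + n D(Q̃ ‖ Q₀)` and Gibbs' inequality give
`n D(Q̃ ‖ Q₀) ≤ δ`. The bound `V² ≤ D` comes from `log x ≤ x - 1`, which yields
`D(P ‖ Q) ≥ 2 - 2 ∑ √(P Q)`, and Cauchy–Schwarz `(∑ √(P Q))² ≤ (∑ min)(∑ max) = 1 - V²`.
Finally `V(Q̃, Q₀) = μ V(Q₁, Q₀)` because `Q̃ - Q₀ = μ (Q₁ - Q₀)`.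
-/

open Real

section Divergence

variable {α : Type} [Fintype α]

lemma sub_le_mul_log_div {p r : ℝ} (hp : 0 ≤ p) (hr : 0 ≤ r) (hpr : 0 < p → 0 < r) :
    p - r ≤ p * log (p / r) := by
  rcases hp.eq_or_lt with rfl | hp
  · simpa using hr
  have hr := hpr hp
  have hlog := log_le_sub_one_of_pos (div_pos hr hp)
  have hmul : p * (r / p - 1) = r - p := by field_simp
  rw [← inv_div, log_inv]
  nlinarith

lemma two_mul_sub_sqrt_mul_le_mul_log_div {p q : ℝ} (hp : 0 ≤ p) (hq : 0 < q) :
    2 * (p - √(p * q)) ≤ p * log (p / q) := by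
  rcases hp.eq_or_lt with rfl | hp
  · simp
  have hpq : 0 < √(p * q) := sqrt_pos.2 (mul_pos hp hq)
  have hsqrt : p / √(p * q) = √(p / q) := by
    rw [sqrt_div hp.le, sqrt_mul hp.le, div_mul_eq_div_div, div_sqrt]
  have hlog : log (p / q) = 2 * log (p / √(p * q)) := by
    rw [hsqrt, log_sqrt (div_pos hp hq).le]; ring
  rw [hlog]
  nlinarith [sub_le_mul_log_div hp.le hpq.le fun _ => hpq]

lemma KL_nonneg_of_sum_le_one {P R : α → ℝ} (hP : IsPMF P) (hR : ∀ z, 0 ≤ R z)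
    (hR1 : ∑ z, R z ≤ 1) (hPR : ∀ z, 0 < P z → 0 < R z) : 0 ≤ KL P R := by
  have h := Finset.sum_le_sum fun z (_ : z ∈ Finset.univ) =>
    sub_le_mul_log_div (hP.1 z) (hR z) (hPR z)
  rw [Finset.sum_sub_distrib, hP.2] at h
  rw [KL]; linarith

lemma two_sub_two_mul_sum_sqrt_mul_le_KL {P Q : α → ℝ} (hP : IsPMF P) (hQ : ∀ z, 0 < Q z) :
    2 - 2 * ∑ z, √(P z * Q z) ≤ KL P Q := by
  have h := Finset.sum_le_sum fun z (_ : z ∈ Finset.univ) =>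
    two_mul_sub_sqrt_mul_le_mul_log_div (hP.1 z) (hQ z)
  rw [← Finset.mul_sum, Finset.sum_sub_distrib, hP.2] at h
  rw [KL]; linarith

lemma sq_sum_sqrt_mul_le_one_sub_TV_sq {P Q : α → ℝ} (hP : IsPMF P) (hQ : IsPMF Q) :
    (∑ z, √(P z * Q z)) ^ 2 ≤ 1 - TV P Q ^ 2 := by
  have hmin : ∀ z, 0 ≤ min (P z) (Q z) := fun z => le_min (hP.1 z) (hQ.1 z)
  have hmax : ∀ z, 0 ≤ max (P z) (Q z) := fun z => (hP.1 z).trans (le_max_left _ _)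
  have hsum : ∑ z, min (P z) (Q z) + ∑ z, max (P z) (Q z) = 2 := by
    rw [← Finset.sum_add_distrib]
    simp only [min_add_max, Finset.sum_add_distrib, hP.2, hQ.2]
    norm_num
  have hdiff : ∑ z, max (P z) (Q z) - ∑ z, min (P z) (Q z) = 2 * TV P Q := by
    rw [← Finset.sum_sub_distrib, TV]
    simp only [max_sub_min_eq_abs']
    ring
  have hcs := Finset.sum_mul_sq_le_sq_mul_sq Finset.univ
    (fun z => √(min (P z) (Q z))) (fun z => √(max (P z) (Q z)))
  simp only [sq_sqrt (hmin _), sq_sqrt (hmax _), ← sqrt_mul (hmin _), min_mul_max] at hcs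
  have hprod : (∑ z, min (P z) (Q z)) * ∑ z, max (P z) (Q z) = 1 - TV P Q ^ 2 := by
    rw [show ∑ z, min (P z) (Q z) = 1 - TV P Q by linarith,
      show ∑ z, max (P z) (Q z) = 1 + TV P Q by linarith]
    ring
  exact hprod ▸ hcs

lemma TV_sq_le_KL {P Q : α → ℝ} (hP : IsPMF P) (hQ : IsPMF Q) (hQpos : ∀ z, 0 < Q z) :
    TV P Q ^ 2 ≤ KL P Q := by
  have hlower := two_sub_two_mul_sum_sqrt_mul_le_KL hP hQpos
  have hupper := sq_sum_sqrt_mul_le_one_sub_TV_sq hP hQ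
  have hs : 0 ≤ ∑ z, √(P z * Q z) := Finset.sum_nonneg fun z _ => sqrt_nonneg _
  nlinarith

lemma TV_pos_of_ne {P Q : α → ℝ} (h : P ≠ Q) : 0 < TV P Q := by
  obtain ⟨z, hz⟩ := Function.ne_iff.mp h
  have : 0 < |P z - Q z| := abs_pos.mpr (sub_ne_zero.mpr hz)
  have := Finset.single_le_sum (fun z _ => abs_nonneg (P z - Q z)) (Finset.mem_univ z)
  rw [TV]; linarith

lemma TV_mix_eq_mul_TV {μ : ℝ} (hμ : 0 ≤ μ) (P Q : α → ℝ) :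
    TV (fun z => μ * P z + (1 - μ) * Q z) Q = μ * TV P Q := by
  simp only [TV, show ∀ z, μ * P z + (1 - μ) * Q z - Q z = μ * (P z - Q z) from fun z => by ring,
    abs_mul, abs_of_nonneg hμ, ← Finset.mul_sum]
  ring

end Divergence

section Marginals

variable {ι α : Type} [Fintype ι] [DecidableEq ι] [Fintype α]

lemma sum_prod_eq_one {f : ι → α → ℝ} (hf : ∀ t, ∑ w, f t w = 1) :
    ∑ z : ι → α, ∏ t, f t (z t) = 1 := by
  simp [← Fintype.prod_sum, hf]

variable [DecidableEq α]

def marginal (P : (ι → α) → ℝ) (t : ι) (w : α) : ℝ :=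
  ∑ z with z t = w, P z

noncomputable def avgMarginal (P : (ι → α) → ℝ) (w : α) : ℝ :=
  (Fintype.card ι : ℝ)⁻¹ * ∑ t, marginal P t w

lemma sum_marginal_mul (P : (ι → α) → ℝ) (t : ι) (g : α → ℝ) :
    ∑ w, marginal P t w * g w = ∑ z, P z * g (z t) := by
  simp only [marginal, Finset.sum_mul]
  rw [← Finset.sum_fiberwise Finset.univ (fun z : ι → α => z t)]
  refine Finset.sum_congr rfl fun w _ => Finset.sum_congr rfl fun z hz => ?_
  rw [(Finset.mem_filter.mp hz).2]

lemma le_marginal {P : (ι → α) → ℝ} (hP : ∀ z, 0 ≤ P z) (z : ι → α) (t : ι) :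
    P z ≤ marginal P t (z t) :=
  Finset.single_le_sum (fun z' _ => hP z') (by simp)

lemma marginal_nonneg {P : (ι → α) → ℝ} (hP : ∀ z, 0 ≤ P z) (t : ι) (w : α) :
    0 ≤ marginal P t w :=
  Finset.sum_nonneg fun z _ => hP z

lemma avgMarginal_nonneg {P : (ι → α) → ℝ} (hP : ∀ z, 0 ≤ P z) (w : α) :
    0 ≤ avgMarginal P w :=
  mul_nonneg (by positivity) (Finset.sum_nonneg fun t _ => marginal_nonneg hP t w)

lemma isPMF_avgMarginal [Nonempty ι] {P : (ι → α) → ℝ} (hP : IsPMF P) :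
    IsPMF (avgMarginal P) := by
  refine ⟨avgMarginal_nonneg hP.1, ?_⟩
  have hsum : ∀ t, ∑ w, marginal P t w = 1 := fun t => by
    simpa [hP.2] using sum_marginal_mul P t 1
  simp only [avgMarginal, ← Finset.mul_sum]
  rw [Finset.sum_comm]
  simp [hsum]

lemma avgMarginal_pos {P : (ι → α) → ℝ} (hP : ∀ z, 0 ≤ P z) {z : ι → α} (hz : 0 < P z)
    (t : ι) : 0 < avgMarginal P (z t) := by
  have : Nonempty ι := ⟨t⟩
  refine mul_pos (by positivity) ((hz.trans_le (le_marginal hP z t)).trans_le ?_)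
  exact Finset.single_le_sum (f := fun t' => marginal P t' (z t))
    (fun t' _ => marginal_nonneg hP t' (z t)) (Finset.mem_univ t)

lemma marginal_prod {f : ι → α → ℝ} (hf : ∀ t, ∑ w, f t w = 1) (t : ι) (w : α) :
    marginal (fun z => ∏ s, f s (z s)) t w = f t w := by
  set g : ι → α → ℝ := fun s u => if s = t then (if u = w then f s u else 0) else f s u
  have hg : ∀ z : ι → α, (if z t = w then ∏ s, f s (z s) else 0) = ∏ s, g s (z s) := by
    intro z
    split_ifs with h
    · exact Finset.prod_congr rfl fun s _ => by by_cases hs : s = t <;> simp [g, hs, h]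
    · exact (Finset.prod_eq_zero (Finset.mem_univ t) (by simp [g, h])).symm
  rw [marginal, Finset.sum_filter, Finset.sum_congr rfl fun z _ => hg z, ← Fintype.prod_sum,
    Fintype.prod_eq_single t fun s hs => by simp [g, hs, hf]]
  simp [g]

lemma KL_pi_eq_KL_pi_avgMarginal_add [Nonempty ι] {P : (ι → α) → ℝ} (hP : ∀ z, 0 ≤ P z)
    {Q : α → ℝ} (hQ : ∀ w, 0 < Q w) :
    KL P (fun z => ∏ t, Q (z t)) =
      KL P (fun z => ∏ t, avgMarginal P (z t)) + Fintype.card ι * KL (avgMarginal P) Q := by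
  set Qb := avgMarginal P
  set g : α → ℝ := fun w => log (Qb w) - log (Q w)
  have hpoint : ∀ z, P z * log (P z / ∏ t, Q (z t)) =
      P z * log (P z / ∏ t, Qb (z t)) + ∑ t, P z * g (z t) := by
    intro z
    rcases (hP z).eq_or_lt with hz | hz
    · simp [← hz]
    have hQb : ∀ t, Qb (z t) ≠ 0 := fun t => (avgMarginal_pos hP hz t).ne'
    rw [log_div hz.ne' (Finset.prod_ne_zero_iff.2 fun t _ => (hQ _).ne'),
      log_div hz.ne' (Finset.prod_ne_zero_iff.2 fun t _ => hQb t),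
      log_prod fun t _ => (hQ _).ne', log_prod fun t _ => hQb t, ← Finset.mul_sum,
      Finset.sum_sub_distrib]
    ring
  have hcross : ∑ z, ∑ t, P z * g (z t) = Fintype.card ι * KL Qb Q := by
    have hcard : ∀ w, ∑ t, marginal P t w = Fintype.card ι * Qb w := fun w => by
      simp [Qb, avgMarginal]
    rw [Finset.sum_comm]
    simp only [← sum_marginal_mul]
    rw [Finset.sum_comm]
    simp only [← Finset.sum_mul, hcard, KL, Finset.mul_sum, mul_assoc]
    refine Finset.sum_congr rfl fun w _ => ?_
    rcases (avgMarginal_nonneg hP w).eq_or_lt with h | h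
    · simp only [Qb, ← h, zero_mul, mul_zero]
    · rw [log_div h.ne' (hQ w).ne']
  rw [KL, Finset.sum_congr rfl fun z _ => hpoint z, Finset.sum_add_distrib, hcross]
  rfl

lemma card_mul_KL_avgMarginal_le_KL_pi [Nonempty ι] {P : (ι → α) → ℝ} (hP : IsPMF P)
    {Q : α → ℝ} (hQ : ∀ w, 0 < Q w) :
    Fintype.card ι * KL (avgMarginal P) Q ≤ KL P (fun z => ∏ t, Q (z t)) := by
  rw [KL_pi_eq_KL_pi_avgMarginal_add hP.1 hQ, le_add_iff_nonneg_left]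
  exact KL_nonneg_of_sum_le_one hP
    (fun z => Finset.prod_nonneg fun t _ => avgMarginal_nonneg hP.1 _)
    (sum_prod_eq_one fun _ => (isPMF_avgMarginal hP).2).le
    (fun z hz => Finset.prod_pos fun t _ => avgMarginal_pos hP.1 hz t)

end Marginals

section LinearCode

lemma sum_comp_addMonoidHom_zmod_two {V : Type*} [AddCommGroup V] [Fintype V]
    (φ : V →+ ZMod 2) {v₀ : V} (hv₀ : φ v₀ = 1) (f : ZMod 2 → ℝ) :
    ∑ v, f (φ v) = Fintype.card V / 2 * (f 0 + f 1) := by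
  have hshift : ∑ v, f (φ v) = ∑ v, f (φ v + 1) := by
    rw [← Equiv.sum_comp (Equiv.addRight v₀) (fun v => f (φ v))]
    simp [hv₀]
  have hpair : ∀ a : ZMod 2, f a + f (a + 1) = f 0 + f 1 := by
    intro a
    fin_cases a
    · rfl
    · exact add_comm _ _ -- `1 + 1` reduces to `0` in `ZMod 2`
  have : 2 * ∑ v, f (φ v) = Fintype.card V * (f 0 + f 1) := by
    rw [two_mul]
    nth_rewrite 2 [hshift]
    simp [← Finset.sum_add_distrib, hpair, mul_add]
  linarith

lemma sum_comp_vecMul_apply {κ ι : Type*} [Fintype κ] [DecidableEq κ]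
    (G : Matrix κ ι (ZMod 2)) (t : ι) (f : ZMod 2 → ℝ) :
    ∑ v : κ → ZMod 2, f (Matrix.vecMul v G t) = if ∃ i, G i t ≠ 0
      then Fintype.card (κ → ZMod 2) / 2 * (f 0 + f 1) else Fintype.card (κ → ZMod 2) * f 0 := by
  split_ifs with h
  · obtain ⟨i, hi⟩ := h
    have hGit : G i t = 1 := (by decide : ∀ a : ZMod 2, a ≠ 0 → a = 1) _ hi
    exact sum_comp_addMonoidHom_zmod_two
      (LinearMap.proj t ∘ₗ G.vecMulLinear).toAddMonoidHom (v₀ := Pi.single i 1)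
      (by simp [hGit]) f
  · push Not at h
    simp [Matrix.vecMul, dotProduct, h]

variable {𝒵 : Type} [Fintype 𝒵] {n k : ℕ}

noncomputable def codeOutput (W : Bool → 𝒵 → ℝ) (G : Matrix (Fin k) (Fin n) (ZMod 2))
    (z : Fin n → 𝒵) : ℝ :=
  ((2:ℝ)^k)⁻¹ * ∑ v : Fin k → ZMod 2,
    prodCh W n z (fun t => if Matrix.vecMul v G t = 1 then true else false)

lemma isPMF_codeOutput {W : Bool → 𝒵 → ℝ} (hW : ∀ x, IsPMF (W x))
    (G : Matrix (Fin k) (Fin n) (ZMod 2)) : IsPMF (codeOutput W G) := by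
  refine ⟨fun z => mul_nonneg (by positivity) (Finset.sum_nonneg fun v _ =>
    Finset.prod_nonneg fun t _ => (hW _).1 _), ?_⟩
  simp only [codeOutput, prodCh, ← Finset.mul_sum]
  rw [Finset.sum_comm]
  simp [sum_prod_eq_one fun t => (hW _).2]

lemma marginal_codeOutput [DecidableEq 𝒵] {W : Bool → 𝒵 → ℝ} (hW : ∀ x, IsPMF (W x))
    (G : Matrix (Fin k) (Fin n) (ZMod 2)) (t : Fin n) (w : 𝒵) :
    marginal (codeOutput W G) t w =
      if ∃ i, G i t ≠ 0 then (W true w + W false w) / 2 else W false w := by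
  have hlin : marginal (codeOutput W G) t w = ((2:ℝ)^k)⁻¹ * ∑ v : Fin k → ZMod 2,
      marginal (fun z => prodCh W n z
        (fun t => if Matrix.vecMul v G t = 1 then true else false)) t w := by
    simp only [marginal, codeOutput, ← Finset.mul_sum]
    rw [Finset.sum_comm]
  simp only [hlin, prodCh, marginal_prod fun s => (hW _).2]
  have hcard : (Fintype.card (Fin k → ZMod 2) : ℝ) = 2 ^ k := by simp [ZMod.card]
  rw [sum_comp_vecMul_apply G t (fun a => W (if a = 1 then true else false) w), hcard]
  simp only [zero_ne_one, if_false, if_true]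
  split_ifs
  · field_simp; ring
  · field_simp

lemma avgMarginal_codeOutput [DecidableEq 𝒵] {W : Bool → 𝒵 → ℝ} (hW : ∀ x, IsPMF (W x))
    (G : Matrix (Fin k) (Fin n) (ZMod 2)) (hn : 0 < n) :
    let μ : ℝ := (#{t | ∃ i, G i t ≠ 0} : ℕ) / (2 * n)
    avgMarginal (codeOutput W G) = fun w => μ * W true w + (1 - μ) * W false w := by
  intro μ
  ext w
  have hcols := Finset.card_filter_add_card_filter_not (s := Finset.univ)
    (fun t : Fin n => ∃ i, G i t ≠ 0)
  rw [Finset.card_univ, Fintype.card_fin] at hcols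
  have hcolsR : ((#{t | ¬∃ i, G i t ≠ 0} : ℕ) : ℝ) = n - #{t | ∃ i, G i t ≠ 0} := by
    rw [eq_sub_iff_add_eq']; exact_mod_cast hcols
  have hnR : (n : ℝ) ≠ 0 := by positivity
  simp only [avgMarginal, marginal_codeOutput hW, Finset.sum_ite, Finset.sum_const,
    nsmul_eq_mul, Fintype.card_fin, μ]
  rw [hcolsR]
  field_simp
  ring

end LinearCode

theorem stmt2_general {𝒵 : Type} [Fintype 𝒵] [DecidableEq 𝒵]
    (W : Bool → 𝒵 → ℝ) (hW : ∀ x, IsPMF (W x))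
    (hQ0pos : ∀ z, 0 < W false z) (hneq : W true ≠ W false)
    (n k : ℕ) (hn : 1 ≤ n)
    (G : Matrix (Fin k) (Fin n) (ZMod 2))
    (δ : ℝ)
    (hcov : KL (fun z : Fin n → 𝒵 => ((2:ℝ)^k)⁻¹ * ∑ v : Fin k → ZMod 2,
        prodCh W n z (fun t => if Matrix.vecMul v G t = 1 then true else false))
      (fun z => prodCh W n z (fun _ => false)) ≤ δ) :
    let m : ℕ := (univ.filter fun t : Fin n => ∃ i, G i t ≠ 0).card
    let μ : ℝ := (m : ℝ) / (2*n)
    let Qt : 𝒵 → ℝ := fun z => μ * W true z + (1-μ) * W false z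
    δ/n ≥ KL Qt (W false) ∧
    KL Qt (W false) ≥ TV Qt (W false)^2 ∧
    TV Qt (W false)^2 = (μ * TV (W true) (W false))^2 ∧
    μ ≤ (1 / TV (W true) (W false)) * Real.sqrt (δ/n) ∧
    (m:ℝ) ≤ (2 / TV (W true) (W false)) * Real.sqrt (n*δ) := by
  intro m μ Qt
  have : Nonempty (Fin n) := ⟨⟨0, hn⟩⟩
  have hnR : (0 : ℝ) < n := by exact_mod_cast hn
  have hV : 0 < TV (W true) (W false) := TV_pos_of_ne hneq
  have hQt : avgMarginal (codeOutput W G) = Qt := avgMarginal_codeOutput hW G hn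
  have hKL : KL Qt (W false) ≤ δ / n := by
    rw [le_div_iff₀ hnR, mul_comm, ← hQt]
    simpa using (card_mul_KL_avgMarginal_le_KL_pi (isPMF_codeOutput hW G) hQ0pos).trans hcov
  have hpinsker : TV Qt (W false) ^ 2 ≤ KL Qt (W false) :=
    TV_sq_le_KL (hQt ▸ isPMF_avgMarginal (isPMF_codeOutput hW G)) (hW false) hQ0pos
  have hTV : TV Qt (W false) = μ * TV (W true) (W false) := TV_mix_eq_mul_TV (by positivity) _ _
  have hμ : μ ≤ 1 / TV (W true) (W false) * √(δ / n) := by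
    rw [one_div, inv_mul_eq_div, le_div_iff₀ hV]
    exact le_sqrt_of_sq_le (hTV ▸ hpinsker.trans hKL)
  refine ⟨hKL, hpinsker, by rw [hTV], hμ, ?_⟩
  calc (m : ℝ) = 2 * n * μ := by simp only [μ]; field_simp
    _ ≤ 2 * n * (1 / TV (W true) (W false) * √(δ / n)) := by gcongr
    _ = 2 / TV (W true) (W false) * √(n * δ) := by
      rw [show (n : ℝ) * δ = n ^ 2 * (δ / n) by field_simp, sqrt_mul (sq_nonneg _),
        sqrt_sq hnR.le]
      ring

/-- The square-root law for linear codes: if the output distribution induced by an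
`(n,k)` linear code is `δ`-close in KL divergence to the innocent distribution, then
with `m` the number of nonzero columns of `G` and `μ = m/(2n)`,
`δ/n ≥ D(Q̃‖Q0) ≥ V(Q̃,Q0)² = (μ V(Q1,Q0))²`, hence `μ ≤ √(δ/n)/V(Q1,Q0)` and
`m ≤ 2√(nδ)/V(Q1,Q0)`. -/
theorem stmt2 {𝒵 : Type} [Fintype 𝒵] [DecidableEq 𝒵]
    (W : Bool → 𝒵 → ℝ) (hW : ∀ x, IsPMF (W x))
    (hQ0pos : ∀ z, 0 < W false z) (hneq : W true ≠ W false)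
    (n k : ℕ) (hn : 1 ≤ n) (hk1 : 1 ≤ k) (hkn : k ≤ n)
    (G : Matrix (Fin k) (Fin n) (ZMod 2)) (hrank : G.rank = k)
    (δ : ℝ) (hδ : 0 < δ)
    (hcov : KL (fun z : Fin n → 𝒵 => ((2:ℝ)^k)⁻¹ * ∑ v : Fin k → ZMod 2,
        prodCh W n z (fun t => if Matrix.vecMul v G t = 1 then true else false))
      (fun z => prodCh W n z (fun _ => false)) ≤ δ) :
    let m : ℕ := (univ.filter fun t : Fin n => ∃ i, G i t ≠ 0).card
    let μ : ℝ := (m : ℝ) / (2*n)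
    let Qt : 𝒵 → ℝ := fun z => μ * W true z + (1-μ) * W false z
    δ/n ≥ KL Qt (W false) ∧
    KL Qt (W false) ≥ TV Qt (W false)^2 ∧
    TV Qt (W false)^2 = (μ * TV (W true) (W false))^2 ∧
    μ ≤ (1 / TV (W true) (W false)) * Real.sqrt (δ/n) ∧
    (m:ℝ) ≤ (2 / TV (W true) (W false)) * Real.sqrt (n*δ) :=
  stmt2_general W hW hQ0pos hneq n k hn G δ hcov
end

section
/- Let X_1,…,X_q be mutually independent finitely-valued random variables and let Ỹ be any finitely-valued random variable on the same finite probability space. Then for every S ⊆ {1,…,q}: Σ_{i∈S} I(X_i; Ỹ | X_{i+1:q}) ≤ I(X_S; Ỹ | X_{S^c}), where X_{i+1:q} = (X_{i+1},…,X_q), X_S = (X_i)_{i∈S}, and X_{S^c} = (X_i)_{i∉S}. -/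
open Finset

/-- Pmf of the random variable `T` under the pmf `p` on a finite space. -/
noncomputable def pmOf {Ω D : Type} [Fintype Ω] [DecidableEq D]
    (p : Ω → ℝ) (T : Ω → D) (d : D) : ℝ :=
  ∑ ω, if T ω = d then p ω else 0

/-- Shannon entropy of the random variable `T` under `p`. -/
noncomputable def ent {Ω D : Type} [Fintype Ω] [Fintype D] [DecidableEq D]
    (p : Ω → ℝ) (T : Ω → D) : ℝ :=
  ∑ d, Real.negMulLog (pmOf p T d)

/-- Conditional mutual information `I(U;V|Wc) = H(U,Wc)+H(V,Wc)−H(U,V,Wc)−H(Wc)`. -/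
noncomputable def condMI {Ω A B C : Type} [Fintype Ω] [Fintype A] [Fintype B] [Fintype C]
    [DecidableEq A] [DecidableEq B] [DecidableEq C]
    (p : Ω → ℝ) (U : Ω → A) (V : Ω → B) (Wc : Ω → C) : ℝ :=
  ent p (fun ω => (U ω, Wc ω)) + ent p (fun ω => (V ω, Wc ω))
    - ent p (fun ω => (U ω, V ω, Wc ω)) - ent p Wc

/-!
Write `f A = H(Ỹ | X_A)`. Each summand on the left is `f {t > i} - f {t ≥ i}`, and the right-hand
side is `f Sᶜ - f univ`. Since `X_i` is independent of every `X_C` with `i ∉ C`, the gain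
`f A - f (A ∪ {i})` can only grow when `A` is enlarged to some `B ∌ i`: the increase is
`I(X_i; X_B | X_A, Ỹ) ≥ 0`. Adding the elements of `S` to `Sᶜ` from the largest down, `i ∈ S` is
added to `Sᶜ ∪ {t ∈ S | t > i} ⊇ {t > i}`, so its gain there bounds its summand; these gains
telescope to `f Sᶜ - f univ`.
-/

open Real

section Entropy

variable {Ω : Type} [Fintype Ω] {p : Ω → ℝ} {A B : Type} [DecidableEq A] [DecidableEq B]

lemma pmOf_nonneg (hp : ∀ ω, 0 ≤ p ω) (T : Ω → A) (d : A) : 0 ≤ pmOf p T d :=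
  sum_nonneg fun ω _ => by split <;> simp [hp ω]

lemma le_pmOf_self (hp : ∀ ω, 0 ≤ p ω) (T : Ω → A) (ω : Ω) : p ω ≤ pmOf p T (T ω) := by
  have := single_le_sum (f := fun ω' => if T ω' = T ω then p ω' else 0)
    (fun ω' _ => by split <;> simp [hp ω']) (mem_univ ω)
  simpa [pmOf] using this

lemma pmOf_self_congr {T : Ω → A} {T' : Ω → B} (h : ∀ ω ω', T ω = T ω' ↔ T' ω = T' ω')
    (ω : Ω) : pmOf p T (T ω) = pmOf p T' (T' ω) :=
  sum_congr rfl fun ω' _ => if_congr (h ω' ω) rfl rfl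

variable [Fintype A]

lemma sum_mul_comp_eq_sum_pmOf (T : Ω → A) (F : A → ℝ) :
    ∑ ω, p ω * F (T ω) = ∑ d, pmOf p T d * F d := by
  simp only [pmOf, sum_mul, ite_mul, zero_mul]
  rw [sum_comm]
  simp

lemma sum_pmOf (T : Ω → A) : ∑ d, pmOf p T d = ∑ ω, p ω := by
  simpa using (sum_mul_comp_eq_sum_pmOf (p := p) T fun _ => 1).symm

lemma ent_eq_neg_sum (T : Ω → A) : ent p T = -∑ ω, p ω * log (pmOf p T (T ω)) := by
  rw [sum_mul_comp_eq_sum_pmOf T fun d => log (pmOf p T d), ent, ← sum_neg_distrib]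
  simp only [negMulLog, neg_mul]

lemma sum_mul_div_pmOf_le (hp : ∀ ω, 0 ≤ p ω) (T : Ω → A) {G : A → ℝ} (hG : ∀ d, 0 ≤ G d) :
    ∑ ω, p ω * (G (T ω) / pmOf p T (T ω)) ≤ ∑ d, G d := by
  rw [sum_mul_comp_eq_sum_pmOf T fun d => G d / pmOf p T d]
  refine sum_le_sum fun d _ => ?_
  rcases (pmOf_nonneg hp T d).eq_or_lt with h | h
  · simp [← h, hG d]
  · rw [mul_div_cancel₀ _ h.ne']

lemma sum_pmOf_prod_fst (U : Ω → A) (W : Ω → B) (c : B) :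
    ∑ a, pmOf p (fun ω => (U ω, W ω)) (a, c) = pmOf p W c := by
  unfold pmOf
  rw [sum_comm]
  refine sum_congr rfl fun ω _ => ?_
  by_cases hW : W ω = c <;> simp [hW]

variable [Fintype B]

lemma ent_congr {T : Ω → A} {T' : Ω → B} (h : ∀ ω ω', T ω = T ω' ↔ T' ω = T' ω') :
    ent p T = ent p T' := by
  simp only [ent_eq_neg_sum, pmOf_self_congr h]

lemma ent_prod_eq_add (hp : ∀ ω, 0 ≤ p ω) {U : Ω → A} {V : Ω → B}
    (h : ∀ ω, pmOf p (fun ω => (U ω, V ω)) (U ω, V ω) = pmOf p U (U ω) * pmOf p V (V ω)) :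
    ent p (fun ω => (U ω, V ω)) = ent p U + ent p V := by
  simp only [ent_eq_neg_sum, h, ← neg_add, ← sum_add_distrib]
  congr 1
  refine sum_congr rfl fun ω _ => ?_
  rcases (hp ω).eq_or_lt with h0 | h0
  · simp [← h0]
  · rw [log_mul (h0.trans_le (le_pmOf_self hp U ω)).ne' (h0.trans_le (le_pmOf_self hp V ω)).ne',
      mul_add]

variable {C : Type} [Fintype C] [DecidableEq C]

lemma sum_pmOf_mul_pmOf_div_pmOf (U : Ω → A) (V : Ω → B) (W : Ω → C) :
    ∑ d : A × B × C, pmOf p (fun ω => (U ω, W ω)) (d.1, d.2.2)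
      * pmOf p (fun ω => (V ω, W ω)) (d.2.1, d.2.2) / pmOf p W d.2.2 = ∑ ω, p ω := by
  calc ∑ d : A × B × C, pmOf p (fun ω => (U ω, W ω)) (d.1, d.2.2)
        * pmOf p (fun ω => (V ω, W ω)) (d.2.1, d.2.2) / pmOf p W d.2.2
      = ∑ c, (∑ a, pmOf p (fun ω => (U ω, W ω)) (a, c))
          * (∑ b, pmOf p (fun ω => (V ω, W ω)) (b, c)) / pmOf p W c := by
        simp only [Fintype.sum_prod_type, sum_mul_sum, sum_div]
        exact sum_comm_cycle
    _ = ∑ ω, p ω := by simp only [sum_pmOf_prod_fst, mul_self_div_self, sum_pmOf]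

/- Gibbs' inequality in the form `log x ≥ 1 - 1/x`, applied to the ratio of `P(a,b,c)` to
`P(a,c) P(b,c) / P(c)`; the latter weights have total mass `∑ p`. -/
theorem condMI_nonneg (hp : ∀ ω, 0 ≤ p ω) (U : Ω → A) (V : Ω → B) (W : Ω → C) :
    0 ≤ condMI p U V W := by
  set T := fun ω => (U ω, V ω, W ω)
  set G : A × B × C → ℝ := fun d => pmOf p (fun ω => (U ω, W ω)) (d.1, d.2.2)
    * pmOf p (fun ω => (V ω, W ω)) (d.2.1, d.2.2) / pmOf p W d.2.2
  have hG : ∀ d, 0 ≤ G d := fun d =>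
    div_nonneg (mul_nonneg (pmOf_nonneg hp _ _) (pmOf_nonneg hp _ _)) (pmOf_nonneg hp _ _)
  have key : ∀ ω, p ω * (1 - G (T ω) / pmOf p T (T ω))
      ≤ p ω * (log (pmOf p T (T ω)) + log (pmOf p W (W ω))
        - log (pmOf p (fun ω => (U ω, W ω)) (U ω, W ω))
        - log (pmOf p (fun ω => (V ω, W ω)) (V ω, W ω))) := by
    intro ω
    rcases (hp ω).eq_or_lt with h0 | h0
    · simp [← h0]
    refine mul_le_mul_of_nonneg_left ?_ h0.le
    have hpos : ∀ {D : Type} [DecidableEq D] (S : Ω → D), 0 < pmOf p S (S ω) :=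
      fun S => h0.trans_le (le_pmOf_self hp S ω)
    have hlog := one_sub_inv_le_log_of_pos (div_pos (mul_pos (hpos T) (hpos W))
      (mul_pos (hpos fun ω => (U ω, W ω)) (hpos fun ω => (V ω, W ω))))
    rw [log_div (mul_pos (hpos T) (hpos W)).ne'
        (mul_pos (hpos fun ω => (U ω, W ω)) (hpos fun ω => (V ω, W ω))).ne',
      log_mul (hpos T).ne' (hpos W).ne',
      log_mul (hpos fun ω => (U ω, W ω)).ne' (hpos fun ω => (V ω, W ω)).ne', inv_div] at hlog
    have hGT : G (T ω) / pmOf p T (T ω) = pmOf p (fun ω => (U ω, W ω)) (U ω, W ω)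
        * pmOf p (fun ω => (V ω, W ω)) (V ω, W ω) / (pmOf p T (T ω) * pmOf p W (W ω)) := by
      simp only [G, T, div_div, mul_comm (pmOf p W (W ω))]
    linarith
  have hsum := sum_mul_div_pmOf_le hp T hG
  rw [sum_pmOf_mul_pmOf_div_pmOf] at hsum
  calc (0 : ℝ) ≤ ∑ ω, p ω * (1 - G (T ω) / pmOf p T (T ω)) := by
        simp only [mul_sub, mul_one, sum_sub_distrib]
        linarith
    _ ≤ _ := sum_le_sum fun ω _ => key ω
    _ = condMI p U V W := by
        simp only [condMI, ent_eq_neg_sum, mul_add, mul_sub, sum_add_distrib, sum_sub_distrib]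
        ring

end Entropy

noncomputable def condEnt {Ω B C : Type} [Fintype Ω] [Fintype B] [Fintype C] [DecidableEq B]
    [DecidableEq C] (p : Ω → ℝ) (V : Ω → B) (W : Ω → C) : ℝ :=
  ent p (fun ω => (V ω, W ω)) - ent p W

section CondEnt

variable {Ω : Type} [Fintype Ω] {p : Ω → ℝ} {A B C C₁ C₂ : Type} [Fintype A] [DecidableEq A]
  [Fintype B] [DecidableEq B] [Fintype C] [DecidableEq C] [Fintype C₁] [DecidableEq C₁]
  [Fintype C₂] [DecidableEq C₂]

lemma condEnt_congr (V : Ω → B) {W : Ω → C} {W' : Ω → C₁}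
    (h : ∀ ω ω', W ω = W ω' ↔ W' ω = W' ω') : condEnt p V W = condEnt p V W' := by
  rw [condEnt, condEnt, ent_congr h, ent_congr (T' := fun ω => (V ω, W' ω))]
  simp [Prod.ext_iff, h]

lemma condMI_eq_condEnt_sub_condEnt {U : Ω → A} (V : Ω → B) {W : Ω → C} {W₁ : Ω → C₁}
    {W₂ : Ω → C₂} (h₁ : ∀ ω ω', W ω = W ω' ↔ W₁ ω = W₁ ω')
    (h₂ : ∀ ω ω', (U ω, W ω) = (U ω', W ω') ↔ W₂ ω = W₂ ω') :
    condMI p U V W = condEnt p V W₁ - condEnt p V W₂ := by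
  rw [← condEnt_congr V h₁, ← condEnt_congr V h₂, condMI, condEnt, condEnt,
    ent_congr (T := fun ω => (U ω, V ω, W ω)) (T' := fun ω => (V ω, U ω, W ω))]
  · ring
  · simp only [Prod.ext_iff]
    tauto

end CondEnt

section Family

variable {Ω ι : Type} {𝒳 : ι → Type}

def restrictFamily (X : ∀ i, Ω → 𝒳 i) (s : Finset ι) (ω : Ω) : ∀ i : s, 𝒳 i :=
  fun i => X i ω

@[simp]
lemma restrictFamily_eq_iff {X : ∀ i, Ω → 𝒳 i} {s : Finset ι} {ω ω' : Ω} :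
    restrictFamily X s ω = restrictFamily X s ω' ↔ ∀ i ∈ s, X i ω = X i ω' := by
  simp [restrictFamily, funext_iff]

lemma subtype_family_eq_iff {X : ∀ i, Ω → 𝒳 i} {P : ι → Prop} {ω ω' : Ω} :
    ((fun i : {i // P i} => X i ω) = fun i : {i // P i} => X i ω') ↔ ∀ i, P i → X i ω = X i ω' := by
  simp [funext_iff]

variable [Fintype Ω] [Fintype ι] [DecidableEq ι] {p : Ω → ℝ} [∀ i, Fintype (𝒳 i)]
  [∀ i, DecidableEq (𝒳 i)] {B : Type} [Fintype B] [DecidableEq B] {X : ∀ i, Ω → 𝒳 i}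

lemma pmOf_restrictFamily_self (hp1 : ∑ ω, p ω = 1)
    (hind : ∀ x : ∀ i, 𝒳 i, pmOf p (fun ω => fun i => X i ω) x = ∏ i, pmOf p (X i) (x i))
    (s : Finset ι) (ω : Ω) :
    pmOf p (restrictFamily X s) (restrictFamily X s ω) = ∏ i ∈ s, pmOf p (X i) (X i ω) := by
  set box : ∀ i, Finset (𝒳 i) := fun i => if i ∈ s then {X i ω} else univ
  calc pmOf p (restrictFamily X s) (restrictFamily X s ω)
      = ∑ ω', p ω' * (if (fun i => X i ω') ∈ Fintype.piFinset box then 1 else 0) := by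
        refine sum_congr rfl fun ω' _ => ?_
        rw [mul_boole]
        refine if_congr ?_ rfl rfl
        rw [restrictFamily_eq_iff, Fintype.mem_piFinset]
        refine forall_congr' fun i => ?_
        by_cases hi : i ∈ s <;> simp [hi, box]
    _ = ∑ z ∈ Fintype.piFinset box, ∏ i, pmOf p (X i) (z i) := by
        rw [sum_mul_comp_eq_sum_pmOf (fun ω i => X i ω)
          fun z => if z ∈ Fintype.piFinset box then 1 else 0]
        simp only [hind, mul_boole]
        rw [sum_ite_mem, univ_inter]
    _ = ∏ i, if i ∈ s then pmOf p (X i) (X i ω) else 1 := by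
        rw [← prod_univ_sum]
        refine prod_congr rfl fun i _ => ?_
        by_cases hi : i ∈ s <;> simp [box, hi, sum_pmOf, hp1]
    _ = ∏ i ∈ s, pmOf p (X i) (X i ω) := Fintype.prod_ite_mem s _

lemma ent_restrictFamily_insert (hp : ∀ ω, 0 ≤ p ω) (hp1 : ∑ ω, p ω = 1)
    (hind : ∀ x : ∀ i, 𝒳 i, pmOf p (fun ω => fun i => X i ω) x = ∏ i, pmOf p (X i) (x i))
    {i : ι} {s : Finset ι} (hi : i ∉ s) :
    ent p (restrictFamily X (insert i s)) = ent p (X i) + ent p (restrictFamily X s) := by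
  have hfib : ∀ ω ω', restrictFamily X (insert i s) ω = restrictFamily X (insert i s) ω'
      ↔ (X i ω, restrictFamily X s ω) = (X i ω', restrictFamily X s ω') := by
    simp [Prod.ext_iff]
  rw [ent_congr hfib]
  refine ent_prod_eq_add hp fun ω => ?_
  rw [← pmOf_self_congr hfib, pmOf_restrictFamily_self hp1 hind, prod_insert hi,
    pmOf_restrictFamily_self hp1 hind]

theorem condEnt_sub_condEnt_insert_le (hp : ∀ ω, 0 ≤ p ω) (hp1 : ∑ ω, p ω = 1)
    (hind : ∀ x : ∀ i, 𝒳 i, pmOf p (fun ω => fun i => X i ω) x = ∏ i, pmOf p (X i) (x i))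
    (Y : Ω → B) {s t : Finset ι} (hst : s ⊆ t) {i : ι} (hi : i ∉ t) :
    condEnt p Y (restrictFamily X s) - condEnt p Y (restrictFamily X (insert i s))
      ≤ condEnt p Y (restrictFamily X t) - condEnt p Y (restrictFamily X (insert i t)) := by
  have hts : ∀ ω ω', (∀ j ∈ t, X j ω = X j ω') → ∀ j ∈ s, X j ω = X j ω' :=
    fun _ _ h j hj => h j (hst hj)
  have e₁ : ent p (fun ω => (X i ω, restrictFamily X s ω, Y ω))
      = ent p (fun ω => (Y ω, restrictFamily X (insert i s) ω)) :=
    ent_congr fun ω ω' => by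
      simp only [Prod.ext_iff, restrictFamily_eq_iff, forall_mem_insert]
      tauto
  have e₂ : ent p (fun ω => (restrictFamily X t ω, restrictFamily X s ω, Y ω))
      = ent p (fun ω => (Y ω, restrictFamily X t ω)) :=
    ent_congr fun ω ω' => by
      simp only [Prod.ext_iff, restrictFamily_eq_iff]
      have := hts ω ω'
      tauto
  have e₃ : ent p (fun ω => (X i ω, restrictFamily X t ω, restrictFamily X s ω, Y ω))
      = ent p (fun ω => (Y ω, restrictFamily X (insert i t) ω)) :=
    ent_congr fun ω ω' => by
      simp only [Prod.ext_iff, restrictFamily_eq_iff, forall_mem_insert]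
      have := hts ω ω'
      tauto
  have e₄ : ent p (fun ω => (restrictFamily X s ω, Y ω))
      = ent p (fun ω => (Y ω, restrictFamily X s ω)) :=
    ent_congr fun ω ω' => by simp only [Prod.ext_iff]; tauto
  have h0 := condMI_nonneg hp (X i) (restrictFamily X t) fun ω => (restrictFamily X s ω, Y ω)
  rw [condMI, e₁, e₂, e₃, e₄] at h0
  simp only [condEnt, ent_restrictFamily_insert hp hp1 hind hi,
    ent_restrictFamily_insert hp hp1 hind fun h => hi (hst h)]
  linarith

end Family

theorem sum_sub_insert_Ioi_le {ι : Type} [LinearOrder ι] [Fintype ι] [LocallyFiniteOrderTop ι]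
    [DecidableEq ι] (f : Finset ι → ℝ)
    (hf : ∀ s t i, s ⊆ t → i ∉ t → f s - f (insert i s) ≤ f t - f (insert i t))
    (S : Finset ι) : ∑ i ∈ S, (f (Ioi i) - f (insert i (Ioi i))) ≤ f Sᶜ - f univ := by
  induction S using Finset.induction_on_max with
  | empty => simp
  | insert a s hlt ih =>
    have ha : a ∉ s := fun h => lt_irrefl a (hlt a h)
    have hIoi : Ioi a ⊆ (insert a s)ᶜ := fun t ht => by
      rw [mem_Ioi] at ht
      simpa [ht.ne'] using fun hts => (hlt t hts).not_gt ht
    have hcompl : insert a (insert a s)ᶜ = sᶜ := by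
      ext t
      by_cases hta : t = a <;> simp [hta, ha]
    have := hf _ _ a hIoi (by simp)
    rw [hcompl] at this
    rw [sum_insert ha]
    linarith

/-- For mutually independent finitely-valued `X_1,…,X_q` and any finitely-valued `Ỹ`
on the same finite probability space, and every `S ⊆ {1,…,q}`:
`∑_{i∈S} I(X_i;Ỹ|X_{i+1:q}) ≤ I(X_S;Ỹ|X_{S^c})`. -/
theorem stmt10 {Ω : Type} [Fintype Ω] (q : ℕ) (𝒳 : Fin q → Type)
    [∀ i, Fintype (𝒳 i)] [∀ i, DecidableEq (𝒳 i)]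
    {B : Type} [Fintype B] [DecidableEq B]
    (p : Ω → ℝ) (hp : ∀ ω, 0 ≤ p ω) (hp1 : ∑ ω, p ω = 1)
    (X : ∀ i, Ω → 𝒳 i) (Y : Ω → B)
    (hind : ∀ x : ∀ i, 𝒳 i,
      pmOf p (fun ω => fun i => X i ω) x = ∏ i, pmOf p (X i) (x i))
    (S : Finset (Fin q)) :
    ∑ i ∈ S, condMI p (X i) Y (fun ω => fun t : {t : Fin q // i < t} => X t ω)
      ≤ condMI p (fun ω => fun t : {t : Fin q // t ∈ S} => X t ω) Y
          (fun ω => fun t : {t : Fin q // t ∉ S} => X t ω) := by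
  calc ∑ i ∈ S, condMI p (X i) Y (fun ω => fun t : {t : Fin q // i < t} => X t ω)
      = ∑ i ∈ S, (condEnt p Y (restrictFamily X (Ioi i))
          - condEnt p Y (restrictFamily X (insert i (Ioi i)))) := by
        refine sum_congr rfl fun i _ => condMI_eq_condEnt_sub_condEnt Y ?_ ?_ <;> intro ω ω' <;>
          simp only [Prod.ext_iff, restrictFamily_eq_iff, subtype_family_eq_iff,
            forall_mem_insert, mem_Ioi]
    _ ≤ condEnt p Y (restrictFamily X Sᶜ) - condEnt p Y (restrictFamily X univ) :=
        sum_sub_insert_Ioi_le (fun s => condEnt p Y (restrictFamily X s))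
          (fun _ _ _ hst hi => condEnt_sub_condEnt_insert_le hp hp1 hind Y hst hi) S
    _ = _ := by
        refine (condMI_eq_condEnt_sub_condEnt Y ?_ ?_).symm <;> intro ω ω' <;>
          simp only [Prod.ext_iff, restrictFamily_eq_iff, subtype_family_eq_iff, mem_compl,
            mem_univ, forall_const, ← forall_and, Classical.imp_and_neg_imp_iff]
end
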